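/- Approximation of shift-invariant events by invariant regions: let L be a measurable shift-invariant event in the trajectory space of a time-homogeneous Markov chain with initial distribution μ and kernel P. Then for every ε > 0 there exists a measurable region I ⊆ S such that (1) P_μ(I^ω) ≥ P_μ(L) − ε, and (2) for every s ∈ S, P_{δ_s}((I^ω)ᶜ ∪ L) = 1. -/

import Mathlib

open MeasureTheory ProbabilityTheory Filter Set ENNReal

/-- The one-step shift on trajectories: `shift ω n = ω (n+1)`. -/
def shift {S : Type*} (ω : ℕ → S) : ℕ → S := fun n => ω (n + 1)

/-- `Fin A`: the event of visiting `A` only finitely many times. -/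
def finVisits {S : Type*} (A : Set S) : Set (ℕ → S) :=
  {ω | ∃ n, ∀ m, n ≤ m → ω m ∉ A}

/-- `Inf B`: the event of visiting `B` infinitely many times. -/
def infVisits {S : Type*} (B : Set S) : Set (ℕ → S) :=
  {ω | ∀ n, ∃ m, n ≤ m ∧ ω m ∈ B}

/-- `{σ_A < ∞}`: the event that the first return time to `A` is finite,
where `σ_A = 1 + τ_A ∘ shift`; equivalently `∃ n, ω (n+1) ∈ A`. -/
def retEvent {S : Type*} (A : Set S) : Set (ℕ → S) := {ω | ∃ n, ω (n + 1) ∈ A}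

/-- `I^ω`: the event of remaining in `I` forever. -/
def invEvent {S : Type*} (I : Set S) : Set (ℕ → S) := {ω | ∀ n, ω n ∈ I}

/-- Prepend a state to a trajectory. -/
def consTraj {S : Type*} (s : S) (ω : ℕ → S) : ℕ → S
  | 0 => s
  | n + 1 => ω n

/-- `T` is the Ionescu–Tulcea trajectory kernel of the time-homogeneous Markov chain with
transition kernel `P`: `T s` is the law on `S^ℕ` (with the product σ-algebra) of the
coordinate Markov chain with kernel `P` started at `s`.  It is uniquely characterised
(by the Ionescu–Tulcea theorem) by the one-step Markov recursion below: the trajectory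
from `s` is `s` followed by a trajectory started from a `P s`-distributed state.
The trajectory measure `P_ξ` with initial distribution `ξ` is then `ξ.bind (fun s => T s)`,
and `P_{δ_s} = T s`. -/
def IsTrajKernel {S : Type*} [MeasurableSpace S] (P : Kernel S S)
    (T : Kernel S (ℕ → S)) : Prop :=
  ∀ s : S, (T s : Measure (ℕ → S)) =
    ((P s : Measure S).bind (fun u => (T u : Measure (ℕ → S)))).map (consTraj s)

open scoped Topology

section Aux

variable {S : Type*} [MeasurableSpace S]

lemma measurable_consTraj (s : S) : Measurable (consTraj s) := by
  apply measurable_pi_lambda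
  intro n
  cases n with
  | zero => exact measurable_const
  | succ n => exact measurable_pi_apply n

lemma shift_consTraj (s : S) (ω : ℕ → S) : shift (consTraj s ω) = ω :=
  funext fun n => rfl

lemma consTraj_preimage {L : Set (ℕ → S)} (hLinv : shift ⁻¹' L = L) (s : S) :
    consTraj s ⁻¹' L = L := by
  ext ω
  constructor
  · intro h
    rw [← hLinv] at h
    rwa [mem_preimage, mem_preimage, shift_consTraj] at h
  · intro h
    rw [mem_preimage, ← hLinv, mem_preimage, shift_consTraj]
    exact h

variable {P : Kernel S S} {T : Kernel S (ℕ → S)} [IsMarkovKernel P] [IsMarkovKernel T]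

lemma traj_lintegral (hT : IsTrajKernel P T) (s : S) {f : (ℕ → S) → ℝ≥0∞}
    (hf : Measurable f) :
    ∫⁻ ω, f ω ∂(T s) = ∫⁻ u, ∫⁻ ω, f (consTraj s ω) ∂(T u) ∂(P s) := by
  rw [hT s, lintegral_map hf (measurable_consTraj s)]
  exact Measure.lintegral_bind T.measurable.aemeasurable (hf.comp (measurable_consTraj s)).aemeasurable

lemma traj_apply (hT : IsTrajKernel P T) (s : S) {E : Set (ℕ → S)} (hE : MeasurableSet E) :
    T s E = ∫⁻ u, T u (consTraj s ⁻¹' E) ∂(P s) := by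
  rw [hT s, Measure.map_apply (measurable_consTraj s) hE,
    Measure.bind_apply ((measurable_consTraj s) hE) T.measurable.aemeasurable]

variable {L : Set (ℕ → S)}

lemma harmonic_h (hT : IsTrajKernel P T) (hLmeas : MeasurableSet L)
    (hLinv : shift ⁻¹' L = L) (s : S) :
    T s L = ∫⁻ u, T u L ∂(P s) := by
  rw [traj_apply hT s hLmeas, consTraj_preimage hLinv]

lemma lintegral_h (hT : IsTrajKernel P T) (hLmeas : MeasurableSet L)
    (hLinv : shift ⁻¹' L = L) :
    ∀ (n : ℕ) (s : S), ∫⁻ ω, T (ω n) L ∂(T s) = T s L := by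
  intro n
  induction n with
  | zero =>
    intro s
    have hf : Measurable (fun ω : ℕ → S => T (ω 0) L) :=
      (T.measurable_coe hLmeas).comp (measurable_pi_apply 0)
    rw [traj_lintegral hT s hf]
    simp only [consTraj]
    simp [lintegral_const, measure_univ]
  | succ n ih =>
    intro s
    have hf : Measurable (fun ω : ℕ → S => T (ω (n + 1)) L) :=
      (T.measurable_coe hLmeas).comp (measurable_pi_apply (n + 1))
    rw [traj_lintegral hT s hf]
    simp only [consTraj]
    calc ∫⁻ u, ∫⁻ ω, T (ω n) L ∂(T u) ∂(P s) = ∫⁻ u, T u L ∂(P s) := by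
          refine lintegral_congr fun u => ih u
      _ = T s L := (harmonic_h hT hLmeas hLinv s).symm

end Aux

section Fil

variable {S : Type*} [MeasurableSpace S]

def trajFil (S : Type*) [MeasurableSpace S] :
    Filtration ℕ (inferInstance : MeasurableSpace (ℕ → S)) where
  seq n := ⨆ k ∈ Iic n, MeasurableSpace.comap (fun ω : ℕ → S => ω k) inferInstance
  mono' m n hmn := biSup_mono (Iic_subset_Iic.mpr hmn)
  le' n := iSup₂_le fun k _ => (measurable_pi_apply k).comap_le

lemma measurable_eval_trajFil {n k : ℕ} (hk : k ≤ n) :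
    Measurable[trajFil S n] (fun ω : ℕ → S => ω k) :=
  Measurable.of_comap_le
    (le_biSup (fun k => MeasurableSpace.comap (fun ω : ℕ → S => ω k) inferInstance)
      (mem_Iic.mpr hk))

lemma iSup_trajFil :
    (⨆ n, trajFil S n : MeasurableSpace (ℕ → S)) = (inferInstance : MeasurableSpace (ℕ → S)) := by
  refine le_antisymm (iSup_le fun n => (trajFil S).le n) ?_
  show (⨆ k, MeasurableSpace.comap (fun ω : ℕ → S => ω k) inferInstance) ≤ _
  refine iSup_le fun k => le_iSup_of_le k ?_
  exact le_biSup (fun k => MeasurableSpace.comap (fun ω : ℕ → S => ω k) inferInstance)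
    (mem_Iic.mpr le_rfl)

def rectSet (E : ℕ → Set S) (n : ℕ) : Set (ℕ → S) := {ω | ∀ k ≤ n, ω k ∈ E k}

lemma rectSet_measurable {E : ℕ → Set S} (hE : ∀ k, MeasurableSet (E k)) (n : ℕ) :
    MeasurableSet[trajFil S n] (rectSet E n) := by
  rw [show rectSet E n = ⋂ k ∈ Iic n, (fun ω : ℕ → S => ω k) ⁻¹' E k by
    ext ω; simp [rectSet, mem_Iic]]
  exact MeasurableSet.biInter (to_countable _)
    fun k hk => (measurable_eval_trajFil (mem_Iic.mp hk)) (hE k)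

lemma consTraj_rectSet_mem {E : ℕ → Set S} {s : S} (hs : s ∈ E 0) (n : ℕ) :
    consTraj s ⁻¹' rectSet E (n + 1) = rectSet (fun k => E (k + 1)) n := by
  ext ω
  simp only [mem_preimage, rectSet, mem_setOf_eq]
  constructor
  · intro h k hk
    exact h (k + 1) (by omega)
  · intro h k hk
    match k with
    | 0 => exact hs
    | k + 1 => exact h k (by omega)

lemma consTraj_rectSet_not_mem {E : ℕ → Set S} {s : S} (hs : s ∉ E 0) (n : ℕ) :
    consTraj s ⁻¹' rectSet E (n + 1) = ∅ := by
  ext ω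
  simp only [mem_preimage, rectSet, mem_setOf_eq, mem_empty_iff_false, iff_false, not_forall]
  exact ⟨0, by omega, hs⟩

lemma consTraj_rectSet_zero_mem {E : ℕ → Set S} {s : S} (hs : s ∈ E 0) :
    consTraj s ⁻¹' rectSet E 0 = univ := by
  ext ω
  simp only [mem_preimage, rectSet, mem_setOf_eq, mem_univ, iff_true]
  intro k hk
  match k with
  | 0 => exact hs

lemma consTraj_rectSet_zero_not_mem {E : ℕ → Set S} {s : S} (hs : s ∉ E 0) :
    consTraj s ⁻¹' rectSet E 0 = ∅ := by
  ext ω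
  simp only [mem_preimage, rectSet, mem_setOf_eq, mem_empty_iff_false, iff_false, not_forall]
  exact ⟨0, le_rfl, hs⟩

end Fil

section Key

variable {S : Type*} [MeasurableSpace S]
variable {P : Kernel S S} {T : Kernel S (ℕ → S)} [IsMarkovKernel P] [IsMarkovKernel T]
variable {L : Set (ℕ → S)}

lemma rect_key (hT : IsTrajKernel P T) (hLmeas : MeasurableSet L)
    (hLinv : shift ⁻¹' L = L) :
    ∀ (n : ℕ) (E : ℕ → Set S), (∀ k, MeasurableSet (E k)) → ∀ s : S,
      T s (rectSet E n ∩ L) = ∫⁻ ω in rectSet E n, T (ω n) L ∂(T s) := by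
  intro n
  induction n with
  | zero =>
    intro E hE s
    have hRa : MeasurableSet (rectSet E 0) := (trajFil S).le 0 _ (rectSet_measurable hE 0)
    have hfm : Measurable fun ω : ℕ → S => (rectSet E 0).indicator (fun ω => T (ω 0) L) ω :=
      Measurable.indicator ((T.measurable_coe hLmeas).comp (measurable_pi_apply 0)) hRa
    rw [← lintegral_indicator hRa _, traj_lintegral hT s hfm,
      traj_apply hT s (hRa.inter hLmeas), preimage_inter, consTraj_preimage hLinv]
    by_cases hs : s ∈ E 0
    · rw [consTraj_rectSet_zero_mem hs, univ_inter]
      have : ∀ u, ∫⁻ ω, (rectSet E 0).indicator (fun ω => T (ω 0) L) (consTraj s ω) ∂(T u)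
          = T s L := by
        intro u
        have hval : ∀ ω : ℕ → S,
            (rectSet E 0).indicator (fun ω => T (ω 0) L) (consTraj s ω) = T s L := by
          intro ω
          rw [indicator_of_mem]
          · rfl
          · intro k hk
            match k with
            | 0 => exact hs
        simp only [hval]
        simp [measure_univ]
      simp only [this]
      rw [lintegral_const, measure_univ, mul_one]
      exact (harmonic_h hT hLmeas hLinv s).symm
    · rw [consTraj_rectSet_zero_not_mem hs, empty_inter]
      have : ∀ u, ∫⁻ ω, (rectSet E 0).indicator (fun ω => T (ω 0) L) (consTraj s ω) ∂(T u)
          = 0 := by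
        intro u
        have hval : ∀ ω : ℕ → S,
            (rectSet E 0).indicator (fun ω => T (ω 0) L) (consTraj s ω) = 0 := by
          intro ω
          apply indicator_of_notMem
          intro hmem
          exact hs (hmem 0 le_rfl)
        simp only [hval]
        simp
      simp only [this]
      simp
  | succ n ih =>
    intro E hE s
    have hRa : MeasurableSet (rectSet E (n + 1)) :=
      (trajFil S).le (n + 1) _ (rectSet_measurable hE (n + 1))
    have hfm : Measurable fun ω : ℕ → S =>
        (rectSet E (n + 1)).indicator (fun ω => T (ω (n + 1)) L) ω :=
      Measurable.indicator ((T.measurable_coe hLmeas).comp (measurable_pi_apply (n + 1))) hRa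
    rw [← lintegral_indicator hRa _, traj_lintegral hT s hfm,
      traj_apply hT s (hRa.inter hLmeas), preimage_inter, consTraj_preimage hLinv]
    by_cases hs : s ∈ E 0
    · rw [consTraj_rectSet_mem hs n]
      have hval : ∀ ω : ℕ → S,
          (rectSet E (n + 1)).indicator (fun ω => T (ω (n + 1)) L) (consTraj s ω)
            = (rectSet (fun k => E (k + 1)) n).indicator (fun ω => T (ω n) L) ω := by
        intro ω
        by_cases hω : ω ∈ rectSet (fun k => E (k + 1)) n
        · have hmem : consTraj s ω ∈ rectSet E (n + 1) := by
            rw [← consTraj_rectSet_mem hs n] at hω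
            exact hω
          rw [indicator_of_mem hmem, indicator_of_mem hω]
          rfl
        · have hmem : consTraj s ω ∉ rectSet E (n + 1) := by
            rw [← consTraj_rectSet_mem hs n] at hω
            exact hω
          rw [indicator_of_notMem hmem, indicator_of_notMem hω]
      simp only [hval]
      have hRa' : MeasurableSet (rectSet (fun k => E (k + 1)) n) :=
        (trajFil S).le n _ (rectSet_measurable (fun k => hE (k + 1)) n)
      calc ∫⁻ u, T u (rectSet (fun k => E (k + 1)) n ∩ L) ∂(P s)
          = ∫⁻ u, ∫⁻ ω in rectSet (fun k => E (k + 1)) n, T (ω n) L ∂(T u) ∂(P s) :=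
            lintegral_congr fun u => ih (fun k => E (k + 1)) (fun k => hE (k + 1)) u
        _ = ∫⁻ u, ∫⁻ ω, (rectSet (fun k => E (k + 1)) n).indicator
              (fun ω => T (ω n) L) ω ∂(T u) ∂(P s) := by
            refine lintegral_congr fun u => ?_
            rw [lintegral_indicator hRa' _]
    · rw [consTraj_rectSet_not_mem hs n, empty_inter]
      have hval : ∀ ω : ℕ → S,
          (rectSet E (n + 1)).indicator (fun ω => T (ω (n + 1)) L) (consTraj s ω) = 0 := by
        intro ω
        apply indicator_of_notMem
        intro hmem
        exact hs (hmem 0 (by omega))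
      simp only [hval]
      simp

end Key

section Cyl

variable {S : Type*} [MeasurableSpace S]
variable {P : Kernel S S} {T : Kernel S (ℕ → S)} [IsMarkovKernel P] [IsMarkovKernel T]
variable {L : Set (ℕ → S)}

lemma cyl_key (hT : IsTrajKernel P T) (hLmeas : MeasurableSet L)
    (hLinv : shift ⁻¹' L = L) (n : ℕ) (s : S) :
    ∀ ⦃A : Set (ℕ → S)⦄, MeasurableSet[trajFil S n] A →
      T s (A ∩ L) = ∫⁻ ω in A, T (ω n) L ∂(T s) := by
  have hgen : (trajFil S n : MeasurableSpace (ℕ → S)) = MeasurableSpace.generateFrom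
      (piiUnionInter (fun k => {t : Set (ℕ → S) |
        MeasurableSet[MeasurableSpace.comap (fun ω : ℕ → S => ω k) inferInstance] t})
        (Iic n)) := by
    have : (trajFil S n : MeasurableSpace (ℕ → S))
        = ⨆ k ∈ Iic n, MeasurableSpace.comap (fun ω : ℕ → S => ω k) inferInstance := rfl
    rw [this]
    exact (generateFrom_piiUnionInter_measurableSet
      (fun k => MeasurableSpace.comap (fun ω : ℕ → S => ω k) inferInstance) (Iic n)).symm
  have hpi : IsPiSystem (piiUnionInter (fun k => {t : Set (ℕ → S) |
      MeasurableSet[MeasurableSpace.comap (fun ω : ℕ → S => ω k) inferInstance] t})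
      (Iic n)) :=
    by
      refine isPiSystem_piiUnionInter _ (fun k => ?_) _
      intro t1 h1 t2 h2 _
      show MeasurableSet[MeasurableSpace.comap (fun ω : ℕ → S => ω k) inferInstance] (t1 ∩ t2)
      exact MeasurableSet.inter h1 h2
  have hfm : Measurable fun ω : ℕ → S => T (ω n) L :=
    (T.measurable_coe hLmeas).comp (measurable_pi_apply n)
  refine MeasurableSpace.induction_on_inter (m := trajFil S n) hgen hpi ?_ ?_ ?_ ?_
  · simp
  · -- basic: π-system sets are rectangles
    rintro t ⟨F, hF, f, hf, rfl⟩
    have hf' : ∀ k : ℕ, ∃ B : Set S, MeasurableSet B ∧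
        (k ∈ F → f k = (fun ω : ℕ → S => ω k) ⁻¹' B) ∧ (k ∉ F → B = univ) := by
      intro k
      by_cases hk : k ∈ F
      · obtain ⟨B, hB, hBeq⟩ := MeasurableSpace.measurableSet_comap.mp (hf k hk)
        exact ⟨B, hB, fun _ => hBeq.symm, fun h => absurd hk h⟩
      · exact ⟨univ, MeasurableSet.univ, fun h => absurd h hk, fun _ => rfl⟩
    choose E hEmeas hEeq hEuniv using hf'
    have ht : (⋂ x ∈ F, f x) = rectSet E n := by
      ext ω
      simp only [mem_iInter, rectSet, mem_setOf_eq]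
      constructor
      · intro h k hk
        by_cases hkF : k ∈ F
        · have := h k hkF
          rwa [hEeq k hkF, mem_preimage] at this
        · rw [hEuniv k hkF]; exact mem_univ _
      · intro h k hk
        rw [hEeq k hk, mem_preimage]
        exact h k (mem_Iic.mp (hF hk))
    rw [ht]
    exact rect_key hT hLmeas hLinv n E hEmeas s
  · -- compl
    intro t ht hC
    have htm : MeasurableSet t := (trajFil S).le n t ht
    have h1 : T s (L ∩ t) + T s (L \ t) = T s L := measure_inter_add_diff L htm
    have h2 : (∫⁻ ω in t, T (ω n) L ∂(T s)) + ∫⁻ ω in tᶜ, T (ω n) L ∂(T s)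
        = T s L := by
      rw [lintegral_add_compl _ htm]
      exact lintegral_h hT hLmeas hLinv n s
    have hid : T s (t ∩ L) + T s (tᶜ ∩ L) = T s L := by
      rw [inter_comm t L, inter_comm tᶜ L, ← diff_eq] at *
      exact h1
    rw [hC] at hid
    have hne : (∫⁻ ω in t, T (ω n) L ∂(T s)) ≠ ⊤ := by
      refine ne_of_lt (lt_of_le_of_lt ?_ (lt_of_le_of_lt (prob_le_one (μ := T s) (s := L))
        one_lt_top))
      rw [← lintegral_h hT hLmeas hLinv n s]
      exact lintegral_mono' Measure.restrict_le_self le_rfl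
    exact (ENNReal.add_right_inj hne).mp (hid.trans h2.symm)
  · -- union
    intro f hdisj hmeas hC
    have hma : ∀ i, MeasurableSet (f i) := fun i => (trajFil S).le n _ (hmeas i)
    rw [iUnion_inter, measure_iUnion
        (hdisj.mono fun i j h => h.mono inter_subset_left inter_subset_left)
        (fun i => (hma i).inter hLmeas),
      lintegral_iUnion hma hdisj]
    exact tsum_congr hC

end Cyl

open scoped Topology

section Levy

variable {S : Type*} [MeasurableSpace S]
variable {P : Kernel S S} {T : Kernel S (ℕ → S)} [IsMarkovKernel P] [IsMarkovKernel T]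
variable {L : Set (ℕ → S)}

lemma condexp_eq (hT : IsTrajKernel P T) (hLmeas : MeasurableSet L)
    (hLinv : shift ⁻¹' L = L) (s : S) (n : ℕ) :
    (fun ω => (T (ω n) L).toReal)
      =ᵐ[T s] (T s)[L.indicator (fun _ => (1 : ℝ)) | trajFil S n] := by
  have hm : (trajFil S n : MeasurableSpace (ℕ → S)) ≤ _ := (trajFil S).le n
  have hgm0 : Measurable fun ω : ℕ → S => T (ω n) L :=
    (T.measurable_coe hLmeas).comp (measurable_pi_apply n)
  have hgm : Measurable fun ω : ℕ → S => (T (ω n) L).toReal := hgm0.ennreal_toReal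
  have hgint : Integrable (fun ω : ℕ → S => (T (ω n) L).toReal) (T s) := by
    refine Integrable.mono' (integrable_const (1 : ℝ)) hgm.aestronglyMeasurable ?_
    refine ae_of_all _ fun ω => ?_
    rw [Real.norm_of_nonneg ENNReal.toReal_nonneg]
    calc (T (ω n) L).toReal ≤ (1 : ℝ≥0∞).toReal :=
          ENNReal.toReal_mono one_ne_top prob_le_one
      _ = 1 := ENNReal.toReal_one
  refine ae_eq_condExp_of_forall_setIntegral_eq hm
    ((integrable_const (1 : ℝ)).indicator hLmeas) (fun A _ _ => hgint.integrableOn)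
    (fun A hA _ => ?_) (StronglyMeasurable.aestronglyMeasurable
      (Measurable.stronglyMeasurable
        (Measurable.ennreal_toReal
          ((T.measurable_coe hLmeas).comp (measurable_eval_trajFil le_rfl)))))
  have hAa : MeasurableSet A := hm A hA
  rw [setIntegral_indicator hLmeas, setIntegral_const, smul_eq_mul, mul_one]
  rw [integral_toReal (hgm0.aemeasurable.restrict)
    (ae_of_all _ fun ω => measure_lt_top _ _)]
  rw [← cyl_key hT hLmeas hLinv n s hA]
  rfl

lemma levy (hT : IsTrajKernel P T) (hLmeas : MeasurableSet L)
    (hLinv : shift ⁻¹' L = L) (s : S) :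
    ∀ᵐ ω ∂(T s), Tendsto (fun n => (T (ω n) L).toReal) atTop
      (𝓝 (L.indicator (fun _ => (1 : ℝ)) ω)) := by
  have hgint : Integrable (L.indicator fun _ => (1 : ℝ)) (T s) :=
    (integrable_const (1 : ℝ)).indicator hLmeas
  have hmeas : StronglyMeasurable[⨆ n, trajFil S n] (L.indicator fun _ => (1 : ℝ)) := by
    rw [iSup_trajFil]
    exact (stronglyMeasurable_const.indicator hLmeas)
  have h1 := hgint.tendsto_ae_condExp hmeas
  have h2 : ∀ᵐ ω ∂(T s), ∀ n : ℕ,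
      (T (ω n) L).toReal = ((T s)[L.indicator (fun _ => (1 : ℝ)) | trajFil S n]) ω :=
    ae_all_iff.mpr fun n => condexp_eq hT hLmeas hLinv s n
  filter_upwards [h1, h2] with ω hω1 hω2
  have : (fun n => (T (ω n) L).toReal)
      = fun n => ((T s)[L.indicator (fun _ => (1 : ℝ)) | trajFil S n]) ω :=
    funext fun n => hω2 n
  rw [this]
  exact hω1

end Levy


/-- approximation of shift-invariant events by invariant regions.  For
every measurable shift-invariant event `L` and every `ε > 0` there is a measurable
region `I ⊆ S` with `P_μ(I^ω) ≥ P_μ(L) − ε` and such that from every state `s`,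
`P_{δ_s}((I^ω)ᶜ ∪ L) = 1`. -/
theorem invariant_region_approximation
    {S : Type*} [MeasurableSpace S]
    (P : Kernel S S) [IsMarkovKernel P]
    (T : Kernel S (ℕ → S)) [IsMarkovKernel T] (hT : IsTrajKernel P T)
    (μ : Measure S) [IsProbabilityMeasure μ]
    (L : Set (ℕ → S)) (hLmeas : MeasurableSet L) (hLinv : shift ⁻¹' L = L)
    (ε : ℝ≥0∞) (hε : 0 < ε) :
    ∃ I : Set S, MeasurableSet I ∧
      (μ.bind (fun s => (T s : Measure (ℕ → S)))) L - ε ≤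
        (μ.bind (fun s => (T s : Measure (ℕ → S)))) (invEvent I) ∧
      (∀ s : S, T s ((invEvent I)ᶜ ∪ L) = 1) := by
  classical
  set δ : ℝ≥0∞ := min ε 1 with hδdef
  have hδpos : 0 < δ := lt_min hε zero_lt_one
  have hδtop : δ ≠ ⊤ := ne_top_of_le_ne_top one_ne_top (min_le_right _ _)
  set I : Set S := {u : S | δ < T u L} with hIdef
  have hImeas : MeasurableSet I :=
    measurableSet_lt measurable_const (T.measurable_coe hLmeas)
  have hInv : MeasurableSet (invEvent I) := by
    have : invEvent I = ⋂ n : ℕ, (fun ω : ℕ → S => ω n) ⁻¹' I := by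
      ext ω; simp [invEvent]
    rw [this]
    exact MeasurableSet.iInter fun n => (measurable_pi_apply n) hImeas
  refine ⟨I, hImeas, ?_, ?_⟩
  · -- the approximation inequality
    set D : ℕ → Set (ℕ → S) := fun n => {ω | (∀ k < n, ω k ∈ I) ∧ ω n ∉ I} with hDdef
    have hDm : ∀ n, MeasurableSet[trajFil S n] (D n) := by
      intro n
      have h1 : MeasurableSet[trajFil S n] ((fun ω : ℕ → S => ω n) ⁻¹' Iᶜ) :=
        (measurable_eval_trajFil le_rfl) hImeas.compl
      have h2 : MeasurableSet[trajFil S n] {ω : ℕ → S | ∀ k < n, ω k ∈ I} := by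
        rw [show {ω : ℕ → S | ∀ k < n, ω k ∈ I}
            = ⋂ k ∈ Iio n, (fun ω : ℕ → S => ω k) ⁻¹' I by ext ω; simp]
        exact MeasurableSet.biInter (to_countable _)
          fun k hk => (measurable_eval_trajFil (le_of_lt (mem_Iio.mp hk))) hImeas
      have : D n = {ω : ℕ → S | ∀ k < n, ω k ∈ I} ∩ (fun ω : ℕ → S => ω n) ⁻¹' Iᶜ := by
        ext ω; simp [hDdef]
      rw [this]
      exact h2.inter h1
    have hDma : ∀ n, MeasurableSet (D n) := fun n => (trajFil S).le n _ (hDm n)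
    have hDdisj : Pairwise (Function.onFun Disjoint D) := by
      intro m n hmn
      rcases lt_or_gt_of_ne hmn with h | h
      · refine disjoint_left.mpr fun ω hm hn => ?_
        exact hm.2 (hn.1 m h)
      · refine disjoint_left.mpr fun ω hm hn => ?_
        exact hn.2 (hm.1 n h)
    have hUnion : (invEvent I)ᶜ = ⋃ n, D n := by
      ext ω
      simp only [mem_compl_iff, invEvent, mem_setOf_eq, not_forall, mem_iUnion]
      constructor
      · rintro ⟨n, hn⟩
        have hex : ∃ n, ω n ∉ I := ⟨n, hn⟩
        refine ⟨Nat.find hex, fun k hk => ?_, Nat.find_spec hex⟩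
        by_contra h
        exact (Nat.find_min hex hk) h
      · rintro ⟨n, hn⟩
        exact ⟨n, hn.2⟩
    have hkey : ∀ s, T s (L ∩ (invEvent I)ᶜ) ≤ δ := by
      intro s
      rw [hUnion, inter_iUnion]
      have hn : ∀ n, T s (L ∩ D n) ≤ δ * T s (D n) := by
        intro n
        rw [inter_comm, cyl_key hT hLmeas hLinv n s (hDm n)]
        calc ∫⁻ ω in D n, T (ω n) L ∂(T s) ≤ ∫⁻ _ω in D n, δ ∂(T s) := by
              refine setLIntegral_mono' (hDma n) fun ω hω => ?_
              exact le_of_not_gt hω.2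
          _ = δ * T s (D n) := setLIntegral_const _ _
      calc T s (⋃ n, L ∩ D n) ≤ ∑' n, T s (L ∩ D n) := measure_iUnion_le _
        _ ≤ ∑' n, δ * T s (D n) := ENNReal.tsum_le_tsum hn
        _ = δ * ∑' n, T s (D n) := ENNReal.tsum_mul_left
        _ = δ * T s (⋃ n, D n) := by rw [measure_iUnion hDdisj hDma]
        _ ≤ δ * 1 := mul_le_mul_right prob_le_one δ
        _ = δ := mul_one δ
    set ρ : Measure (ℕ → S) := μ.bind (fun s => (T s : Measure (ℕ → S))) with hρdef
    have hρap : ∀ {A : Set (ℕ → S)}, MeasurableSet A → ρ A = ∫⁻ s, T s A ∂μ :=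
      fun hA => Measure.bind_apply hA T.measurable.aemeasurable
    have hρb : ρ (L \ invEvent I) ≤ δ := by
      rw [hρap (hLmeas.diff hInv)]
      calc ∫⁻ s, T s (L \ invEvent I) ∂μ ≤ ∫⁻ _s, δ ∂μ := by
            refine lintegral_mono fun s => ?_
            rw [diff_eq]
            exact hkey s
        _ = δ := by rw [lintegral_const, measure_univ, mul_one]
    have h1 : ρ L ≤ ρ (invEvent I) + ε := by
      calc ρ L = ρ (L ∩ invEvent I) + ρ (L \ invEvent I) :=
            (measure_inter_add_diff L hInv).symm
        _ ≤ ρ (invEvent I) + δ := add_le_add (measure_mono inter_subset_right) hρb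
        _ ≤ ρ (invEvent I) + ε := add_le_add_right (min_le_left _ _) _
    exact tsub_le_iff_right.mpr h1
  · -- from every state the region is almost surely absorbing into L
    intro s
    rw [← prob_compl_eq_zero_iff (hInv.compl.union hLmeas), compl_union, compl_compl]
    have hlevy := levy hT hLmeas hLinv s
    rw [ae_iff] at hlevy
    refine measure_mono_null ?_ hlevy
    rintro ω ⟨hω1, hω2⟩
    simp only [mem_setOf_eq]
    intro htend
    rw [indicator_of_notMem hω2] at htend
    have hge : ∀ n : ℕ, δ.toReal ≤ (T (ω n) L).toReal := fun n =>
      ENNReal.toReal_mono (measure_ne_top _ _) (le_of_lt (hω1 n))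
    have hle : δ.toReal ≤ 0 := ge_of_tendsto htend (Eventually.of_forall hge)
    exact absurd hle (not_le.mpr (ENNReal.toReal_pos hδpos.ne' hδtop))
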